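/- arXiv:2002.04010 — 2 statements merged into one kernel-verified Lean document; each statement's English description precedes it below -/
import Mathlib

section
/- Lipschitzness of the Taylorized Jacobian on a Frobenius ball (part of Lemma A.2(a)): Assume σ' is C₁-Lipschitz, σ is k-times continuously differentiable with σ^{(k)} L-Lipschitz, and ‖x_i‖ = 1 for all i. Then for every C₀ > 0 there exists a constant K > 0 depending only on (k, L, C₁, C₀, n) — in particular not on m — such that for all W, W̃ ∈ (ℝ^d)^m with ‖W − W₀‖_F ≤ C₀ and ‖W̃ − W₀‖_F ≤ C₀: ‖J^{(k)}(W) − J^{(k)}(W̃)‖_F ≤ K ‖W − W̃‖_F. -/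
open scoped BigOperators RealInnerProductSpace
noncomputable section

/-- Weight space: `m` neurons, each in `ℝ^d`, with the Frobenius (ℓ²-of-ℓ²) norm. -/
abbrev Wts (d m : ℕ) : Type := PiLp 2 (fun _ : Fin m => EuclideanSpace ℝ (Fin d))

/-- Two-layer network `f_W(x) = m^{-1/2} ∑_r a_r σ(⟨w_r, x⟩)`. -/
def net (d m : ℕ) (σ : ℝ → ℝ) (a : Fin m → ℝ) (W : Wts d m)
    (x : EuclideanSpace ℝ (Fin d)) : ℝ :=
  (Real.sqrt m)⁻¹ * ∑ r : Fin m, a r * σ ⟪W r, x⟫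

/-- The `k`-th order Taylorized model of the network around `W₀`. -/
def netT (d m k : ℕ) (σ : ℝ → ℝ) (a : Fin m → ℝ) (W₀ : Wts d m) (W : Wts d m)
    (x : EuclideanSpace ℝ (Fin d)) : ℝ :=
  (Real.sqrt m)⁻¹ * ∑ r : Fin m, a r *
    ∑ j ∈ Finset.range (k + 1),
      (iteratedDeriv j σ ⟪W₀ r, x⟫ / (j.factorial : ℝ)) * ⟪W r - W₀ r, x⟫ ^ j

/-- Residual vector `g(W) ∈ ℝⁿ`, `g(W)ᵢ = f_W(xᵢ) - yᵢ`. -/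
def resid (d m n : ℕ) (σ : ℝ → ℝ) (a : Fin m → ℝ)
    (X : Fin n → EuclideanSpace ℝ (Fin d)) (y : EuclideanSpace ℝ (Fin n))
    (W : Wts d m) : EuclideanSpace ℝ (Fin n) :=
  WithLp.toLp 2 (fun i => net d m σ a W (X i) - y i)

/-- Residual vector `g⁽ᵏ⁾(W) ∈ ℝⁿ` of the Taylorized model. -/
def residT (d m n k : ℕ) (σ : ℝ → ℝ) (a : Fin m → ℝ) (W₀ : Wts d m)
    (X : Fin n → EuclideanSpace ℝ (Fin d)) (y : EuclideanSpace ℝ (Fin n))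
    (W : Wts d m) : EuclideanSpace ℝ (Fin n) :=
  WithLp.toLp 2 (fun i => netT d m k σ a W₀ W (X i) - y i)

/-- Squared loss `L(W) = ½‖g(W)‖²`. -/
def loss (d m n : ℕ) (σ : ℝ → ℝ) (a : Fin m → ℝ)
    (X : Fin n → EuclideanSpace ℝ (Fin d)) (y : EuclideanSpace ℝ (Fin n))
    (W : Wts d m) : ℝ :=
  (1 / 2) * ‖resid d m n σ a X y W‖ ^ 2

/-- Squared loss `L⁽ᵏ⁾(W) = ½‖g⁽ᵏ⁾(W)‖²` of the Taylorized model. -/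
def lossT (d m n k : ℕ) (σ : ℝ → ℝ) (a : Fin m → ℝ) (W₀ : Wts d m)
    (X : Fin n → EuclideanSpace ℝ (Fin d)) (y : EuclideanSpace ℝ (Fin n))
    (W : Wts d m) : ℝ :=
  (1 / 2) * ‖residT d m n k σ a W₀ X y W‖ ^ 2

/-- `i`-th row of the Jacobian `J(W)`: the gradient of `W ↦ f_W(xᵢ)`.
Its `r`-th block `Jrow ... W i r` is the gradient `∇_{w_r} f_W(xᵢ)`. -/
def Jrow (d m n : ℕ) (σ : ℝ → ℝ) (a : Fin m → ℝ)
    (X : Fin n → EuclideanSpace ℝ (Fin d)) (W : Wts d m) (i : Fin n) : Wts d m :=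
  gradient (fun V => net d m σ a V (X i)) W

/-- `i`-th row of the Taylorized Jacobian `J⁽ᵏ⁾(W)`. -/
def JrowT (d m n k : ℕ) (σ : ℝ → ℝ) (a : Fin m → ℝ) (W₀ : Wts d m)
    (X : Fin n → EuclideanSpace ℝ (Fin d)) (W : Wts d m) (i : Fin n) : Wts d m :=
  gradient (fun V => netT d m k σ a W₀ V (X i)) W


/-!
The `r`-th block of row `i` of `J⁽ᵏ⁾(W)` is `m^{-1/2} a_r p_r'(⟨w_r - w_{r,0}, x_i⟩) x_i`, where
`p_r` is the degree-`k` Taylor polynomial of `σ` at `⟨w_{r,0}, x_i⟩`. On the ball the argument of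
`p_r'` stays in `[-C₀, C₀]`, so `p_r'` is Lipschitz there with a constant controlled by the Taylor
coefficients `σ⁽ʲ⁾/j!`, `2 ≤ j ≤ k`; the scale `m^{-1/2} ≤ 1` and `|a_r| = 1` do not enlarge it, and
the `n` rows cost a factor `√n`.

The coefficients are bounded in terms of `k`, `C₁`, `L` alone: `|σ''| ≤ C₁` and `σ⁽ᵏ⁾` is
`L`-Lipschitz, and in between one interpolates. Going up, the mean value theorem finds near every
point a point where `σ⁽ʲ⁾` is small; going down, a bound on `σ⁽ʲ⁺¹⁾` makes `σ⁽ʲ⁾` Lipschitz, which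
spreads that smallness to every point.
-/

open Set

section DerivativeBounds

theorem nonneg_of_abs_sub_le_mul {g : ℝ → ℝ} {C : ℝ}
    (hg : ∀ s t, |g s - g t| ≤ C * |s - t|) : 0 ≤ C := by
  simpa using (abs_nonneg _).trans (hg 1 0)

theorem abs_deriv_le_of_abs_sub_le_mul {g : ℝ → ℝ} {C : ℝ}
    (hg : ∀ s t, |g s - g t| ≤ C * |s - t|) (x : ℝ) : |deriv g x| ≤ C := by
  have hC := nonneg_of_abs_sub_le_mul hg
  have hlip : LipschitzWith C.toNNReal g := LipschitzWith.of_dist_le_mul fun s t => by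
    simpa [Real.dist_eq, Real.coe_toNNReal _ hC] using hg s t
  simpa [Real.coe_toNNReal _ hC] using norm_deriv_le_of_lipschitz (x₀ := x) hlip

theorem abs_sub_le_mul_of_abs_deriv_le {g : ℝ → ℝ} {B : ℝ} (hg : Differentiable ℝ g)
    (hB : ∀ x, |deriv g x| ≤ B) (s t : ℝ) : |g s - g t| ≤ B * |s - t| := by
  simpa using convex_univ.norm_image_sub_le_of_norm_deriv_le (fun x _ => hg x)
    (fun x _ => hB x) (mem_univ t) (mem_univ s)

theorem abs_le_add_mul_of_exists_abs_le {g : ℝ → ℝ} {A B c x : ℝ}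
    (hg : ∀ s t, |g s - g t| ≤ B * |s - t|) (h : ∃ ξ ∈ Icc x (x + c), |g ξ| ≤ A) :
    |g x| ≤ A + B * c := by
  obtain ⟨ξ, ⟨hxξ, hξx⟩, hgξ⟩ := h
  have hdist : |x - ξ| ≤ c := by rw [abs_sub_comm, abs_of_nonneg (by linarith)]; linarith
  have := abs_sub_abs_le_abs_sub (g x) (g ξ)
  nlinarith [hg x ξ, nonneg_of_abs_sub_le_mul hg]

/-- Two points at distance at least one where `g` is small enclose a point where the slope,
hence `deriv g`, is small. -/
theorem exists_abs_deriv_le_of_forall_exists_abs_le {g : ℝ → ℝ} (hg : Differentiable ℝ g)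
    {A c : ℝ} (h : ∀ x, ∃ ξ ∈ Icc x (x + c), |g ξ| ≤ A) (x : ℝ) :
    ∃ η ∈ Icc x (x + (2 * c + 1)), |deriv g η| ≤ 2 * A := by
  obtain ⟨ξ₁, ⟨hx₁, h₁x⟩, hg₁⟩ := h x
  obtain ⟨ξ₂, ⟨h₁₂, h₂x⟩, hg₂⟩ := h (ξ₁ + 1)
  obtain ⟨η, ⟨hη₁, hη₂⟩, hslope⟩ := exists_deriv_eq_slope g (by linarith : ξ₁ < ξ₂)
    hg.continuous.continuousOn fun y _ => (hg y).differentiableWithinAt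
  refine ⟨η, ⟨by linarith, by linarith⟩, ?_⟩
  rw [hslope, abs_div, abs_of_pos (by linarith : 0 < ξ₂ - ξ₁)]
  calc |g ξ₂ - g ξ₁| / (ξ₂ - ξ₁) ≤ |g ξ₂ - g ξ₁| := div_le_self (abs_nonneg _) (by linarith)
    _ ≤ |g ξ₂| + |g ξ₁| := abs_sub _ _
    _ ≤ 2 * A := by linarith

variable {f : ℝ → ℝ} {n : ℕ} {A L : ℝ}

theorem exists_abs_iteratedDeriv_le (hf : ContDiff ℝ n f) (hA : ∀ x, |f x| ≤ A) {j : ℕ}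
    (hj : j ≤ n) (x : ℝ) : ∃ ξ ∈ Icc x (x + (2 ^ j - 1)), |iteratedDeriv j f ξ| ≤ 2 ^ j * A := by
  induction j generalizing x with
  | zero => exact ⟨x, ⟨le_rfl, by simp⟩, by simpa using hA x⟩
  | succ j ih =>
    obtain ⟨η, ⟨hxη, hηx⟩, hη⟩ := exists_abs_deriv_le_of_forall_exists_abs_le
      (hf.differentiable_iteratedDeriv j (by exact_mod_cast hj)) (ih (by omega)) x
    refine ⟨η, ⟨hxη, by rw [pow_succ]; linarith⟩, ?_⟩
    rw [iteratedDeriv_succ, pow_succ]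
    linarith

/-- A Landau–Kolmogorov type bound. -/
theorem abs_iteratedDeriv_le_of_abs_le_of_lipschitz (hf : ContDiff ℝ n f)
    (hA : ∀ x, |f x| ≤ A)
    (hL : ∀ s t, |iteratedDeriv n f s - iteratedDeriv n f t| ≤ L * |s - t|)
    {j : ℕ} (hj : j ≤ n) (x : ℝ) : |iteratedDeriv j f x| ≤ (2 ^ n * (1 + A + L)) ^ (n + 1) := by
  set Q : ℝ := 2 ^ n * (1 + A + L)
  have hA0 : 0 ≤ A := (abs_nonneg _).trans (hA 0)
  have hL0 : 0 ≤ L := nonneg_of_abs_sub_le_mul hL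
  have h2n : (1 : ℝ) ≤ 2 ^ n := one_le_pow₀ one_le_two
  have hQ : 1 ≤ Q := one_le_mul_of_one_le_of_one_le h2n (by linarith)
  have near : ∀ i ≤ n, ∀ x, ∃ ξ ∈ Icc x (x + (2 ^ n - 1)), |iteratedDeriv i f ξ| ≤ 2 ^ n * A :=
    fun i hi x => by
      have h2i : (2 : ℝ) ^ i ≤ 2 ^ n := pow_le_pow_right₀ one_le_two hi
      obtain ⟨ξ, ⟨hxξ, hξx⟩, hξ⟩ := exists_abs_iteratedDeriv_le hf hA hi x
      exact ⟨ξ, ⟨hxξ, by linarith⟩, hξ.trans (by gcongr)⟩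
  have descend : ∀ i ≤ n, ∀ x, |iteratedDeriv (n - i) f x| ≤ Q ^ (i + 1) := by
    intro i
    induction i with
    | zero =>
      intro _ x
      have := abs_le_add_mul_of_exists_abs_le hL (near n le_rfl x)
      simp only [Nat.sub_zero, zero_add, pow_one]
      nlinarith
    | succ i ih =>
      intro hi x
      have hQi : 1 ≤ Q ^ (i + 1) := one_le_pow₀ hQ
      have hlip := abs_sub_le_mul_of_abs_deriv_le
        (hf.differentiable_iteratedDeriv (n - (i + 1)) (by exact_mod_cast (by omega)))
        (fun y => by rw [← iteratedDeriv_succ, show n - (i + 1) + 1 = n - i by omega]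
                     exact ih (by omega) y)
      have := abs_le_add_mul_of_exists_abs_le hlip (near _ (by omega) x)
      calc |iteratedDeriv (n - (i + 1)) f x| ≤ 2 ^ n * A + Q ^ (i + 1) * (2 ^ n - 1) := this
        _ ≤ 2 ^ n * A * Q ^ (i + 1) + 2 ^ n * Q ^ (i + 1) := by
          nlinarith [mul_le_mul_of_nonneg_left hQi (by positivity : (0 : ℝ) ≤ 2 ^ n * A)]
        _ ≤ Q * Q ^ (i + 1) := by
          have : 0 ≤ 2 ^ n * L * Q ^ (i + 1) := by positivity
          linear_combination this
        _ = Q ^ (i + 1 + 1) := by ring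
  calc |iteratedDeriv j f x| = |iteratedDeriv (n - (n - j)) f x| := by rw [Nat.sub_sub_self hj]
    _ ≤ Q ^ (n - j + 1) := descend _ (Nat.sub_le n j) x
    _ ≤ Q ^ (n + 1) := pow_le_pow_right₀ hQ (by omega)

end DerivativeBounds

theorem abs_iteratedDeriv_le_of_lipschitz_deriv {σ : ℝ → ℝ} {k : ℕ} {C₁ L : ℝ}
    (hσ : ContDiff ℝ k σ) (hC₁ : ∀ s t, |deriv σ s - deriv σ t| ≤ C₁ * |s - t|)
    (hL : ∀ s t, |iteratedDeriv k σ s - iteratedDeriv k σ t| ≤ L * |s - t|)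
    {j : ℕ} (h2j : 2 ≤ j) (hjk : j ≤ k) (x : ℝ) :
    |iteratedDeriv j σ x| ≤ (2 ^ (k - 2) * (1 + C₁ + L)) ^ (k - 1) := by
  obtain ⟨n, rfl⟩ : ∃ n, k = n + 2 := ⟨k - 2, by omega⟩
  obtain ⟨i, rfl⟩ : ∃ i, j = i + 2 := ⟨j - 2, by omega⟩
  have hshift : ∀ i, iteratedDeriv (i + 2) σ = iteratedDeriv i (deriv (deriv σ)) := fun i => by
    rw [iteratedDeriv_succ', iteratedDeriv_succ']
  rw [hshift] at hL ⊢
  simpa using abs_iteratedDeriv_le_of_abs_le_of_lipschitz (hσ.iterate_deriv' n 2)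
    (abs_deriv_le_of_abs_sub_le_mul hC₁) hL (by omega : i ≤ n) x

/-- The terms `j ≤ 1` are constant in `s`, so only the coefficients `c j`, `j ≥ 2`, matter. -/
theorem abs_sum_mul_deriv_pow_sub_le (c : ℕ → ℝ) (k : ℕ) {M C s t : ℝ}
    (hc : ∀ j, 2 ≤ j → j ≤ k → |c j| ≤ M) (hs : |s| ≤ C) (ht : |t| ≤ C) :
    |∑ j ∈ Finset.range (k + 1), c j * (j * s ^ (j - 1))
        - ∑ j ∈ Finset.range (k + 1), c j * (j * t ^ (j - 1))|
      ≤ M * (∑ j ∈ Finset.range (k + 1), (j * (j - 1 : ℕ) : ℝ) * C ^ (j - 2)) * |s - t| := by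
  rw [← Finset.sum_sub_distrib, Finset.mul_sum, Finset.sum_mul]
  refine (Finset.abs_sum_le_sum_abs _ _).trans (Finset.sum_le_sum fun j hjk => ?_)
  replace hjk : j ≤ k := Nat.lt_succ_iff.mp (Finset.mem_range.mp hjk)
  have hpow : |s ^ (j - 1) - t ^ (j - 1)| ≤ |s - t| * (j - 1 : ℕ) * C ^ (j - 2) := by
    refine (abs_pow_sub_pow_le s t (j - 1)).trans ?_
    rw [Nat.sub_sub]
    gcongr
    exact max_le hs ht
  rw [← mul_sub, ← mul_sub, abs_mul, abs_mul, Nat.abs_cast]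
  rcases lt_or_ge j 2 with hj | hj
  · interval_cases j <;> simp
  · calc |c j| * (j * |s ^ (j - 1) - t ^ (j - 1)|)
        ≤ M * (j * (|s - t| * (j - 1 : ℕ) * C ^ (j - 2))) := by
          gcongr
          · exact (abs_nonneg _).trans (hc j hj hjk)
          · exact hc j hj hjk
      _ = M * ((j * (j - 1 : ℕ) : ℝ) * C ^ (j - 2)) * |s - t| := by ring

theorem hasGradientAt_sum_comp_inner {ι E : Type*} [Fintype ι] [NormedAddCommGroup E]
    [InnerProductSpace ℝ E] [CompleteSpace E] {φ : ι → ℝ → ℝ} {φ' : ι → ℝ}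
    {W : PiLp 2 (fun _ : ι => E)} (x : E) (hφ : ∀ r, HasDerivAt (φ r) (φ' r) ⟪W r, x⟫) :
    HasGradientAt (fun V : PiLp 2 (fun _ : ι => E) => ∑ r, φ r ⟪V r, x⟫)
      (WithLp.toLp 2 fun r => φ' r • x) W := by
  rw [hasGradientAt_iff_hasFDerivAt]
  have hinner : ∀ r, HasFDerivAt (fun V : PiLp 2 (fun _ : ι => E) => ⟪V r, x⟫)
      ((innerSL ℝ x).comp (PiLp.proj 2 _ r)) W := fun r => by
    have : (fun V : PiLp 2 (fun _ : ι => E) => ⟪V r, x⟫)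
        = (innerSL ℝ x).comp (PiLp.proj 2 _ r) := by
      ext V; simp [real_inner_comm]
    rw [this]
    exact ContinuousLinearMap.hasFDerivAt _
  refine (HasFDerivAt.fun_sum (u := Finset.univ) fun r _ =>
    (hφ r).comp_hasFDerivAt W (hinner r)).congr_fderiv ?_
  ext V
  simp [PiLp.inner_apply, real_inner_smul_left]

theorem JrowT_apply (d m n k : ℕ) (σ : ℝ → ℝ) (a : Fin m → ℝ) (W₀ : Wts d m)
    (X : Fin n → EuclideanSpace ℝ (Fin d)) (W : Wts d m) (i : Fin n) (r : Fin m) :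
    JrowT d m n k σ a W₀ X W i r = ((Real.sqrt m)⁻¹ * (a r * ∑ j ∈ Finset.range (k + 1),
      iteratedDeriv j σ ⟪W₀ r, X i⟫ / j.factorial * (j * ⟪W r - W₀ r, X i⟫ ^ (j - 1)))) • X i := by
  set φ : Fin m → ℝ → ℝ := fun r t => (Real.sqrt m)⁻¹ * (a r * ∑ j ∈ Finset.range (k + 1),
    iteratedDeriv j σ ⟪W₀ r, X i⟫ / j.factorial * (t - ⟪W₀ r, X i⟫) ^ j)
  have hnetT : (fun V => netT d m k σ a W₀ V (X i)) = fun V => ∑ r, φ r ⟪V r, X i⟫ := by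
    funext V
    simp [φ, netT, Finset.mul_sum, inner_sub_left]
  have hφ : ∀ r, HasDerivAt (φ r) ((Real.sqrt m)⁻¹ * (a r * ∑ j ∈ Finset.range (k + 1),
      iteratedDeriv j σ ⟪W₀ r, X i⟫ / j.factorial * (j * ⟪W r - W₀ r, X i⟫ ^ (j - 1))))
      ⟪W r, X i⟫ := fun r => by
    refine ((HasDerivAt.fun_sum fun j _ => (((hasDerivAt_id _).sub_const _).pow j).const_mul
      _).const_mul _).const_mul _ |>.congr_deriv ?_
    simp [inner_sub_left]
  unfold JrowT
  rw [hnetT, (hasGradientAt_sum_comp_inner (X i) hφ).gradient]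

theorem PiLp.norm_le_mul_of_forall_norm_apply_le {ι : Type*} [Fintype ι] {β : ι → Type*}
    [∀ r, SeminormedAddCommGroup (β r)] {U V : PiLp 2 β} {c : ℝ} (hc : 0 ≤ c)
    (h : ∀ r, ‖U r‖ ≤ c * ‖V r‖) : ‖U‖ ≤ c * ‖V‖ := by
  refine (pow_le_pow_iff_left₀ (norm_nonneg _) (by positivity) two_ne_zero).mp ?_
  rw [mul_pow, PiLp.norm_sq_eq_of_L2, PiLp.norm_sq_eq_of_L2, Finset.mul_sum]
  gcongr with r
  rw [← mul_pow]
  exact pow_le_pow_left₀ (norm_nonneg _) (h r) 2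

theorem sqrt_sum_sq_le_sqrt_card_mul {ι : Type*} [Fintype ι] {f : ι → ℝ} {B : ℝ}
    (hB : 0 ≤ B) (h : ∀ i, |f i| ≤ B) :
    √(∑ i, f i ^ 2) ≤ √(Fintype.card ι) * B := by
  calc √(∑ i, f i ^ 2) ≤ √(∑ _i : ι, B ^ 2) :=
        Real.sqrt_le_sqrt (Finset.sum_le_sum fun i _ =>
          sq_le_sq' (neg_le_of_abs_le (h i)) (le_of_abs_le (h i)))
    _ = √(Fintype.card ι) * B := by
        rw [Finset.sum_const, Finset.card_univ, nsmul_eq_mul, Real.sqrt_mul (Nat.cast_nonneg _),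
          Real.sqrt_sq hB]

theorem norm_JrowT_sub_le {d m n k : ℕ} {σ : ℝ → ℝ} {a : Fin m → ℝ} {W₀ W W' : Wts d m}
    {X : Fin n → EuclideanSpace ℝ (Fin d)} {i : Fin n} {M C : ℝ} (hM : 0 ≤ M)
    (hσ : ∀ j, 2 ≤ j → j ≤ k → ∀ u, |iteratedDeriv j σ u| ≤ M) (ha : ∀ r, |a r| ≤ 1)
    (hX : ‖X i‖ ≤ 1) (hW : ‖W - W₀‖ ≤ C) (hW' : ‖W' - W₀‖ ≤ C) :
    ‖JrowT d m n k σ a W₀ X W i - JrowT d m n k σ a W₀ X W' i‖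
      ≤ M * (∑ j ∈ Finset.range (k + 1), (j * (j - 1 : ℕ) : ℝ) * C ^ (j - 2)) * ‖W - W'‖ := by
  have hC : 0 ≤ C := (norm_nonneg _).trans hW
  have hinner_le : ∀ v : EuclideanSpace ℝ (Fin d), |⟪v, X i⟫| ≤ ‖v‖ := fun v =>
    (abs_real_inner_le_norm _ _).trans (mul_le_of_le_one_right (norm_nonneg _) hX)
  have hblock : ∀ {U : Wts d m} {r}, ‖U - W₀‖ ≤ C → |⟪U r - W₀ r, X i⟫| ≤ C := fun {U r} hU =>
    (hinner_le _).trans (by simpa using (PiLp.norm_apply_le (U - W₀) r).trans hU)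
  have hscale : ∀ r, |(Real.sqrt m)⁻¹ * a r| ≤ 1 := fun r => by
    rw [abs_mul, abs_inv, abs_of_nonneg (Real.sqrt_nonneg _)]
    refine mul_le_one₀ ?_ (abs_nonneg _) (ha r)
    rcases Nat.eq_zero_or_pos m with rfl | hm
    · simp
    · exact inv_le_one_of_one_le₀ (Real.one_le_sqrt.mpr (by exact_mod_cast hm))
  refine PiLp.norm_le_mul_of_forall_norm_apply_le (by positivity) fun r => ?_
  have hcoeff : ∀ j, 2 ≤ j → j ≤ k → |iteratedDeriv j σ ⟪W₀ r, X i⟫ / j.factorial| ≤ M :=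
    fun j h2j hjk => by
      rw [abs_div, Nat.abs_cast]
      exact (div_le_self (abs_nonneg _) (mod_cast j.factorial_pos)).trans (hσ j h2j hjk _)
  have hdiff : |⟪W r - W₀ r, X i⟫ - ⟪W' r - W₀ r, X i⟫| ≤ ‖(W - W') r‖ := by
    rw [← inner_sub_left, sub_sub_sub_cancel_right, ← PiLp.sub_apply]
    exact hinner_le _
  rw [PiLp.sub_apply, JrowT_apply, JrowT_apply, ← sub_smul, ← mul_sub, ← mul_sub, ← mul_assoc,
    norm_smul, Real.norm_eq_abs, abs_mul]
  have hpoly := abs_sum_mul_deriv_pow_sub_le _ k hcoeff (hblock (r := r) hW) (hblock (r := r) hW')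
  calc _ ≤ 1 * (M * (∑ j ∈ Finset.range (k + 1), (j * (j - 1 : ℕ) : ℝ) * C ^ (j - 2))
          * |⟪W r - W₀ r, X i⟫ - ⟪W' r - W₀ r, X i⟫|) * 1 := by
        gcongr
        exact hscale r
    _ ≤ _ := by
        rw [one_mul, mul_one]
        exact mul_le_mul_of_nonneg_left hdiff (by positivity)

theorem taylorized_jacobian_lipschitz_on_ball_general
    (n k : ℕ) (C₁ L C₀ : ℝ) :
    ∃ K : ℝ, 0 < K ∧
      ∀ (d m : ℕ) (σ : ℝ → ℝ), ContDiff ℝ k σ →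
        (∀ s t : ℝ, |deriv σ s - deriv σ t| ≤ C₁ * |s - t|) →
        (∀ s t : ℝ, |iteratedDeriv k σ s - iteratedDeriv k σ t| ≤ L * |s - t|) →
      ∀ a : Fin m → ℝ, (∀ r, a r = 1 ∨ a r = -1) →
      ∀ (W₀ : Wts d m) (X : Fin n → EuclideanSpace ℝ (Fin d)),
        (∀ i, ‖X i‖ = 1) →
      ∀ W W' : Wts d m, ‖W - W₀‖ ≤ C₀ → ‖W' - W₀‖ ≤ C₀ →
        Real.sqrt (∑ i, ‖JrowT d m n k σ a W₀ X W i - JrowT d m n k σ a W₀ X W' i‖ ^ 2)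
          ≤ K * ‖W - W'‖ := by
  set M : ℝ := (2 ^ (k - 2) * (1 + C₁ + L)) ^ (k - 1)
  set K₀ : ℝ := M * ∑ j ∈ Finset.range (k + 1), (j * (j - 1 : ℕ) : ℝ) * C₀ ^ (j - 2)
  refine ⟨max (√n * K₀) 1, lt_max_of_lt_right one_pos, ?_⟩
  intro d m σ hσ hC₁ hL a ha W₀ X hX W W' hW hW'
  have hC₁0 := nonneg_of_abs_sub_le_mul hC₁
  have hL0 := nonneg_of_abs_sub_le_mul hL
  have hC₀0 : 0 ≤ C₀ := (norm_nonneg _).trans hW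
  have hM : 0 ≤ M := by positivity
  have hcoeff : ∀ j, 2 ≤ j → j ≤ k → ∀ u, |iteratedDeriv j σ u| ≤ M := fun _ h2j hjk =>
    abs_iteratedDeriv_le_of_lipschitz_deriv hσ hC₁ hL h2j hjk
  have hsign : ∀ r, |a r| ≤ 1 := fun r => by rcases ha r with h | h <;> simp [h]
  have hrow : ∀ i, ‖JrowT d m n k σ a W₀ X W i - JrowT d m n k σ a W₀ X W' i‖ ≤ K₀ * ‖W - W'‖ :=
    fun i => norm_JrowT_sub_le hM hcoeff hsign (hX i).le hW hW'
  calc √(∑ i, ‖JrowT d m n k σ a W₀ X W i - JrowT d m n k σ a W₀ X W' i‖ ^ 2)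
      ≤ √n * (K₀ * ‖W - W'‖) := by
        have hK₀ : 0 ≤ K₀ := by positivity
        simpa using sqrt_sum_sq_le_sqrt_card_mul (by positivity) fun i =>
          (abs_norm _).trans_le (hrow i)
    _ ≤ max (√n * K₀) 1 * ‖W - W'‖ := by
        rw [← mul_assoc]
        gcongr
        exact le_max_left _ _

/-- Lipschitzness of the Taylorized Jacobian on a Frobenius ball (part of
Lemma A.2(a)); the constant `K` depends only on `(k, L, C₁, C₀, n)` and not on `m`. -/
theorem taylorized_jacobian_lipschitz_on_ball
    (n k : ℕ) (hk : 1 ≤ k) (C₁ L C₀ : ℝ) (hC₀ : 0 < C₀) :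
    ∃ K : ℝ, 0 < K ∧
      ∀ (d m : ℕ) (σ : ℝ → ℝ), ContDiff ℝ k σ →
        (∀ s t : ℝ, |deriv σ s - deriv σ t| ≤ C₁ * |s - t|) →
        (∀ s t : ℝ, |iteratedDeriv k σ s - iteratedDeriv k σ t| ≤ L * |s - t|) →
      ∀ a : Fin m → ℝ, (∀ r, a r = 1 ∨ a r = -1) →
      ∀ (W₀ : Wts d m) (X : Fin n → EuclideanSpace ℝ (Fin d)),
        (∀ i, ‖X i‖ = 1) →
      ∀ W W' : Wts d m, ‖W - W₀‖ ≤ C₀ → ‖W' - W₀‖ ≤ C₀ →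
        Real.sqrt (∑ i, ‖JrowT d m n k σ a W₀ X W i - JrowT d m n k σ a W₀ X W' i‖ ^ 2)
          ≤ K * ‖W - W'‖ :=
  taylorized_jacobian_lipschitz_on_ball_general n k C₁ L C₀
end
end

section
/- Stability of the empirical NTK (used for the third conclusion of Lemma A.1(b)): Assume |σ'(t)| ≤ C₁ for all t, σ' is C₁-Lipschitz, and ‖x_i‖ = 1 for all i. Then for all weight matrices W, W̃ ∈ (ℝ^d)^m: ‖Θ̂(W) − Θ̂(W̃)‖_F ≤ 2 C₁² n m^{−1/2} ‖W − W̃‖_F, where Θ̂(W) = J(W) J(W)^⊤. -/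
open scoped BigOperators RealInnerProductSpace
noncomputable section

/-! The Jacobian rows are explicit, `∇_{w_r} f_W(xᵢ) = m^{-1/2} a_r σ'(⟨w_r, xᵢ⟩) xᵢ`, so with
`a_r² = 1` each NTK entry is `m⁻¹ ⟨xᵢ, xⱼ⟩ ∑_r σ'(⟨w_r, xᵢ⟩) σ'(⟨w_r, xⱼ⟩)`. Boundedness and
Lipschitz continuity of `σ'` make each summand `2 C₁² ‖w_r - w̃_r‖`-Lipschitz in `w_r`, and
Cauchy–Schwarz gives `∑_r ‖w_r - w̃_r‖ ≤ √m ‖W - W̃‖`. Hence every entry of `Θ̂(W) - Θ̂(W̃)` is at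
most `2 C₁² m^{-1/2} ‖W - W̃‖`, and the Frobenius norm of an `n × n` matrix is at most `n` times
its largest entry. -/

theorem abs_mul_sub_mul_le {p q p' q' C δ : ℝ} (hp : |p| ≤ C) (hq' : |q'| ≤ C)
    (hpp' : |p - p'| ≤ C * δ) (hqq' : |q - q'| ≤ C * δ) :
    |p * q - p' * q'| ≤ 2 * C ^ 2 * δ :=
  calc |p * q - p' * q'| = |p * (q - q') + (p - p') * q'| := by ring_nf
    _ ≤ |p| * |q - q'| + |p - p'| * |q'| := by
        rw [← abs_mul, ← abs_mul]; exact abs_add_le _ _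
    _ ≤ C * (C * δ) + C * δ * C := by
        have hC : 0 ≤ C := (abs_nonneg p).trans hp
        have hCδ : 0 ≤ C * δ := (abs_nonneg _).trans hpp'
        gcongr
    _ = 2 * C ^ 2 * δ := by ring

theorem sqrt_sum_sum_sq_le {ι : Type*} [Fintype ι] {e : ι → ι → ℝ} {B : ℝ}
    (h : ∀ i j, |e i j| ≤ B) :
    √(∑ i, ∑ j, e i j ^ 2) ≤ Fintype.card ι * B := by
  rcases isEmpty_or_nonempty ι with hι | ⟨⟨i₀⟩⟩
  · simp
  have hB : 0 ≤ B := (abs_nonneg _).trans (h i₀ i₀)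
  refine Real.sqrt_le_iff.2 ⟨by positivity, ?_⟩
  calc ∑ i, ∑ j, e i j ^ 2 ≤ ∑ _i : ι, ∑ _j : ι, B ^ 2 := by
        refine Finset.sum_le_sum fun i _ => Finset.sum_le_sum fun j _ => ?_
        exact sq_le_sq' (abs_le.1 (h i j)).1 (abs_le.1 (h i j)).2
    _ = (Fintype.card ι * B) ^ 2 := by
        simp only [Finset.sum_const, Finset.card_univ, nsmul_eq_mul]
        ring

theorem PiLp.sum_norm_le_sqrt_card_mul_norm {ι : Type*} [Fintype ι] {E : ι → Type*}
    [∀ i, SeminormedAddCommGroup (E i)] (f : PiLp 2 E) :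
    ∑ i, ‖f i‖ ≤ √(Fintype.card ι) * ‖f‖ := by
  rw [PiLp.norm_eq_of_L2, ← Real.sqrt_mul (Nat.cast_nonneg _),
    Real.le_sqrt (by positivity) (by positivity)]
  exact sq_sum_le_card_mul_sum_sq

section TwoLayer

variable {d m : ℕ} {σ : ℝ → ℝ}

theorem hasGradientAt_net (hσ : Differentiable ℝ σ) (a : Fin m → ℝ)
    (x : EuclideanSpace ℝ (Fin d)) (W : Wts d m) :
    HasGradientAt (fun V => net d m σ a V x)
      (WithLp.toLp 2 fun r => ((√m)⁻¹ * (a r * deriv σ ⟪W r, x⟫)) • x) W := by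
  rw [hasGradientAt_iff_hasFDerivAt]
  let φ (r : Fin m) : Wts d m →L[ℝ] ℝ := (innerSL ℝ x).comp (PiLp.proj 2 _ r)
  have hφ (r : Fin m) (V : Wts d m) : φ r V = ⟪V r, x⟫ := real_inner_comm (V r) x
  have hneuron (r : Fin m) : HasFDerivAt (fun V : Wts d m => a r * σ ⟪V r, x⟫)
      (a r • deriv σ ⟪W r, x⟫ • φ r) W := by
    simp only [← hφ]
    exact (((hσ _).hasDerivAt).comp_hasFDerivAt W (φ r).hasFDerivAt).const_mul (a r)
  refine ((HasFDerivAt.fun_sum fun r _ => hneuron r).const_mul (√m)⁻¹).congr_fderiv ?_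
  ext V
  rw [InnerProductSpace.toDual_apply_apply, PiLp.inner_apply]
  simp only [smul_apply, sum_apply, hφ, real_inner_smul_left, smul_eq_mul, Finset.mul_sum]
  exact Finset.sum_congr rfl fun r _ => by rw [real_inner_comm x (V r)]; ring

theorem Jrow_apply (hσ : Differentiable ℝ σ) {n : ℕ} (a : Fin m → ℝ)
    (X : Fin n → EuclideanSpace ℝ (Fin d)) (W : Wts d m) (i : Fin n) (r : Fin m) :
    Jrow d m n σ a X W i r = ((√m)⁻¹ * (a r * deriv σ ⟪W r, X i⟫)) • X i := by
  rw [Jrow, (hasGradientAt_net hσ a (X i) W).gradient]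

theorem inner_Jrow (hσ : Differentiable ℝ σ) {n : ℕ} {a : Fin m → ℝ}
    (ha : ∀ r, a r = 1 ∨ a r = -1) (X : Fin n → EuclideanSpace ℝ (Fin d)) (W : Wts d m)
    (i j : Fin n) :
    ⟪Jrow d m n σ a X W i, Jrow d m n σ a X W j⟫
      = (m : ℝ)⁻¹ * ⟪X i, X j⟫ * ∑ r, deriv σ ⟪W r, X i⟫ * deriv σ ⟪W r, X j⟫ := by
  have hsqrt : (√m)⁻¹ * (√m)⁻¹ = (m : ℝ)⁻¹ := by
    rw [← mul_inv, Real.mul_self_sqrt (Nat.cast_nonneg m)]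
  rw [PiLp.inner_apply]
  simp only [Jrow_apply hσ, real_inner_smul_left, real_inner_smul_right, Finset.mul_sum]
  refine Finset.sum_congr rfl fun r _ => ?_
  have har : a r * a r = 1 := by rcases ha r with h | h <;> simp [h]
  linear_combination (⟪X i, X j⟫ * deriv σ ⟪W r, X i⟫ * deriv σ ⟪W r, X j⟫) *
    ((√m)⁻¹ * (√m)⁻¹ * har + hsqrt)

theorem abs_deriv_inner_sub_le {C : ℝ} (hC : 0 ≤ C)
    (hlip : ∀ s t : ℝ, |deriv σ s - deriv σ t| ≤ C * |s - t|)
    {x : EuclideanSpace ℝ (Fin d)} (hx : ‖x‖ ≤ 1) (w w' : EuclideanSpace ℝ (Fin d)) :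
    |deriv σ ⟪w, x⟫ - deriv σ ⟪w', x⟫| ≤ C * ‖w - w'‖ :=
  calc |deriv σ ⟪w, x⟫ - deriv σ ⟪w', x⟫| ≤ C * |⟪w - w', x⟫| := by
        rw [inner_sub_left]; exact hlip _ _
    _ ≤ C * ‖w - w'‖ := by
        gcongr
        exact (abs_real_inner_le_norm _ _).trans (mul_le_of_le_one_right (norm_nonneg _) hx)

theorem abs_inner_Jrow_sub_le (hσ : Differentiable ℝ σ) {C : ℝ}
    (hbd : ∀ t : ℝ, |deriv σ t| ≤ C)
    (hlip : ∀ s t : ℝ, |deriv σ s - deriv σ t| ≤ C * |s - t|)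
    {n : ℕ} {a : Fin m → ℝ} (ha : ∀ r, a r = 1 ∨ a r = -1)
    {X : Fin n → EuclideanSpace ℝ (Fin d)} (hX : ∀ i, ‖X i‖ ≤ 1) (W W' : Wts d m)
    (i j : Fin n) :
    |⟪Jrow d m n σ a X W i, Jrow d m n σ a X W j⟫ -
        ⟪Jrow d m n σ a X W' i, Jrow d m n σ a X W' j⟫|
      ≤ 2 * C ^ 2 * (√m)⁻¹ * ‖W - W'‖ := by
  have hC : 0 ≤ C := (abs_nonneg _).trans (hbd 0)
  have hXX : |⟪X i, X j⟫| ≤ 1 :=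
    (abs_real_inner_le_norm _ _).trans (mul_le_one₀ (hX i) (norm_nonneg _) (hX j))
  have hneuron (r : Fin m) :
      |deriv σ ⟪W r, X i⟫ * deriv σ ⟪W r, X j⟫ - deriv σ ⟪W' r, X i⟫ * deriv σ ⟪W' r, X j⟫|
        ≤ 2 * C ^ 2 * ‖(W - W') r‖ :=
    abs_mul_sub_mul_le (hbd _) (hbd _) (abs_deriv_inner_sub_le hC hlip (hX i) _ _)
      (abs_deriv_inner_sub_le hC hlip (hX j) _ _)
  rw [inner_Jrow hσ ha, inner_Jrow hσ ha, ← mul_sub, ← Finset.sum_sub_distrib, abs_mul,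
    abs_mul, abs_inv, Nat.abs_cast]
  calc (m : ℝ)⁻¹ * |⟪X i, X j⟫| * |∑ r, (deriv σ ⟪W r, X i⟫ * deriv σ ⟪W r, X j⟫ -
          deriv σ ⟪W' r, X i⟫ * deriv σ ⟪W' r, X j⟫)|
      ≤ (m : ℝ)⁻¹ * 1 * ∑ r, 2 * C ^ 2 * ‖(W - W') r‖ := by
        gcongr
        exact (Finset.abs_sum_le_sum_abs _ _).trans (Finset.sum_le_sum fun r _ => hneuron r)
    _ ≤ (m : ℝ)⁻¹ * 1 * (2 * C ^ 2 * (√m * ‖W - W'‖)) := by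
        rw [← Finset.mul_sum]
        gcongr
        simpa using PiLp.sum_norm_le_sqrt_card_mul_norm (W - W')
    _ = 2 * C ^ 2 * (√m)⁻¹ * ‖W - W'‖ := by
        rw [← Real.sqrt_div_self]; ring

end TwoLayer

theorem ntk_stability_general
    (d m n : ℕ) (σ : ℝ → ℝ) (hσ : ContDiff ℝ 1 σ)
    (C₁ : ℝ) (hbd : ∀ t : ℝ, |deriv σ t| ≤ C₁)
    (hlip : ∀ s t : ℝ, |deriv σ s - deriv σ t| ≤ C₁ * |s - t|)
    (a : Fin m → ℝ) (ha : ∀ r, a r = 1 ∨ a r = -1)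
    (X : Fin n → EuclideanSpace ℝ (Fin d)) (hX : ∀ i, ‖X i‖ = 1)
    (W W' : Wts d m) :
    Real.sqrt (∑ i, ∑ j,
        (⟪Jrow d m n σ a X W i, Jrow d m n σ a X W j⟫ -
          ⟪Jrow d m n σ a X W' i, Jrow d m n σ a X W' j⟫) ^ 2)
      ≤ 2 * C₁ ^ 2 * n * (Real.sqrt m)⁻¹ * ‖W - W'‖ := by
  have hentry := abs_inner_Jrow_sub_le (hσ.differentiable one_ne_zero) hbd hlip ha
    (fun i => (hX i).le) W W'
  calc _ ≤ n * (2 * C₁ ^ 2 * (√m)⁻¹ * ‖W - W'‖) := by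
        simpa using sqrt_sum_sum_sq_le hentry
    _ = 2 * C₁ ^ 2 * n * (Real.sqrt m)⁻¹ * ‖W - W'‖ := by ring

/-- stability of the empirical NTK in Frobenius norm. -/
theorem ntk_stability
    (d m n : ℕ) (hm : 1 ≤ m) (σ : ℝ → ℝ) (hσ : ContDiff ℝ 1 σ)
    (C₁ : ℝ) (hbd : ∀ t : ℝ, |deriv σ t| ≤ C₁)
    (hlip : ∀ s t : ℝ, |deriv σ s - deriv σ t| ≤ C₁ * |s - t|)
    (a : Fin m → ℝ) (ha : ∀ r, a r = 1 ∨ a r = -1)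
    (X : Fin n → EuclideanSpace ℝ (Fin d)) (hX : ∀ i, ‖X i‖ = 1)
    (W W' : Wts d m) :
    Real.sqrt (∑ i, ∑ j,
        (⟪Jrow d m n σ a X W i, Jrow d m n σ a X W j⟫ -
          ⟪Jrow d m n σ a X W' i, Jrow d m n σ a X W' j⟫) ^ 2)
      ≤ 2 * C₁ ^ 2 * n * (Real.sqrt m)⁻¹ * ‖W - W'‖ :=
  ntk_stability_general d m n σ hσ C₁ hbd hlip a ha X hX W W'
end
end
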